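/- Let n = 2 and α ≥ 1. There exists an allocation rule x ∈ T(σ) with cost approximation ratio R_C(ρ,x) ≤ α if and only if there is no α-cost conflict pair, i.e., if and only if f(1/ρ₂(s), 1/ρ₁(s′)) ≤ α for all profiles s ≺ s′. -/

import Mathlib

namespace Stmt17

variable {k : ℕ}

noncomputable def rho1 (v1 v2 : Fin k × Fin k → ℝ) (s : Fin k × Fin k) : ℝ :=
  v1 s / max (v1 s) (v2 s)

noncomputable def rho2 (v1 v2 : Fin k × Fin k → ℝ) (s : Fin k × Fin k) : ℝ :=
  v2 s / max (v1 s) (v2 s)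

/-- One step of the reachability relation. -/
def step (v1 v2 : Fin k × Fin k → ℝ) (p q : Fin k × Fin k) : Prop :=
  (p.2 = q.2 ∧ v1 p < v1 q) ∨ (p.1 = q.1 ∧ v2 q < v2 p)

/-- The conflict function `f`. -/
noncomputable def conflictF (u v : ℝ) : ℝ :=
  if u = 1 ∧ v = 1 then 1 else (u * v - 1) / (u + v - 2)

/-- Membership in the truthful polytope `T(σ)` (two agents). -/
def InT (v1 v2 x1 x2 : Fin k × Fin k → ℝ) : Prop :=
  (∀ s, 0 ≤ x1 s ∧ x1 s ≤ 1) ∧ (∀ s, 0 ≤ x2 s ∧ x2 s ≤ 1) ∧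
  (∀ s, x1 s + x2 s = 1) ∧
  (∀ a b c : Fin k, v1 (a, c) < v1 (b, c) → x1 (a, c) ≤ x1 (b, c)) ∧
  (∀ a c d : Fin k, v2 (a, c) < v2 (a, d) → x2 (a, c) ≤ x2 (a, d))

/-!
Truthfulness for two agents says exactly that agent 1's share `x₁` is monotone along `≺`.
With `u = 1/ρ₂(s)` and `w = 1/ρ₁(s)`, one of which is `1`, the cost at `s` is
`x₁ w + (1 - x₁) u`. Where `ρ₁(s) = 1` it is at most `α` iff `x₁(s) ≥ (u - α)/(u - 1)`,
and where `ρ₂(s) = 1` iff `x₁(s) ≤ (α - 1)/(w - 1)`. A monotone rule meeting all these bounds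
exists iff every lower bound at `s` lies below every upper bound at `s' ≻ s`, and that comparison
is `f(u, w) ≤ α`. The witness takes at `s` the largest lower bound over the predecessors of `s`.
-/

section ReachSup

variable {ι β : Type*} [Fintype ι] [SemilatticeSup β]

open Classical in
noncomputable def reachSup (r : ι → ι → Prop) (g : ι → β) (s : ι) : β :=
  (Finset.univ.filter (Relation.ReflTransGen r · s)).sup'
    ⟨s, Finset.mem_filter.2 ⟨Finset.mem_univ s, .refl⟩⟩ g

variable {r : ι → ι → Prop} {g : ι → β} {p q s : ι}

theorem le_reachSup (h : Relation.ReflTransGen r p s) : g p ≤ reachSup r g s :=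
  Finset.le_sup' g (by simpa using h)

theorem reachSup_le_iff {c : β} :
    reachSup r g s ≤ c ↔ ∀ p, Relation.ReflTransGen r p s → g p ≤ c :=
  ⟨fun h _ hp => (le_reachSup hp).trans h,
    fun h => Finset.sup'_le _ _ fun p hp => h p (by simpa using hp)⟩

theorem reachSup_mono (h : Relation.ReflTransGen r p q) : reachSup r g p ≤ reachSup r g q :=
  reachSup_le_iff.2 fun _ hp => le_reachSup (hp.trans h)

end ReachSup

section Arithmetic

variable {α u w t t' : ℝ}

theorem conflictF_le_iff (hα : 1 ≤ α) (hu : 1 ≤ u) (hw : 1 ≤ w) :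
    conflictF u w ≤ α ↔ (u - 1) * (w - 1) ≤ (α - 1) * (u - 1 + (w - 1)) := by
  unfold conflictF
  split_ifs with h
  · obtain ⟨rfl, rfl⟩ := h
    simpa using hα
  · have hpos : 0 < u + w - 2 := by
      contrapose! h
      constructor <;> linarith
    rw [div_le_iff₀ hpos]
    constructor <;> intro h <;> linarith

theorem conflictF_le_of_le (hα : 1 ≤ α) (hu : 1 ≤ u) (hw : 1 ≤ w) (htt' : t ≤ t')
    (h : t + (1 - t) * u ≤ α) (h' : t' * w + (1 - t') ≤ α) : conflictF u w ≤ α := by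
  rw [conflictF_le_iff hα hu hw]
  have hu' : 0 ≤ u - 1 := by linarith
  have hw' : 0 ≤ w - 1 := by linarith
  have ha : (1 - t) * (u - 1) ≤ α - 1 := by linarith
  have hb : t' * (w - 1) ≤ α - 1 := by linarith
  calc (u - 1) * (w - 1) = (1 - t) * (u - 1) * (w - 1) + t * ((u - 1) * (w - 1)) := by ring
    _ ≤ (α - 1) * (w - 1) + t' * ((u - 1) * (w - 1)) := by gcongr
    _ = (α - 1) * (w - 1) + t' * (w - 1) * (u - 1) := by ring
    _ ≤ (α - 1) * (w - 1) + (α - 1) * (u - 1) := by gcongr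
    _ = (α - 1) * (u - 1 + (w - 1)) := by ring

/-- The least share of agent 1 for which `t + (1 - t) * u ≤ α`; at `u = 1` the quotient is
`0 / 0 = 0`. -/
noncomputable def lowerBound (α u : ℝ) : ℝ :=
  max 0 ((u - α) / (u - 1))

theorem lowerBound_nonneg : 0 ≤ lowerBound α u :=
  le_max_left _ _

theorem lowerBound_one : lowerBound α 1 = 0 := by
  simp [lowerBound]

theorem lowerBound_le_one (hα : 1 ≤ α) (hu : 1 ≤ u) : lowerBound α u ≤ 1 :=
  max_le zero_le_one (div_le_one_of_le₀ (by linarith) (by linarith))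

theorem add_one_sub_mul_le_of_lowerBound_le (hα : 1 ≤ α) (hu : 1 ≤ u)
    (ht : lowerBound α u ≤ t) : t + (1 - t) * u ≤ α := by
  rcases hu.eq_or_lt with rfl | hu
  · linarith
  · have h := (le_max_right _ _).trans ht
    rw [div_le_iff₀ (sub_pos.2 hu)] at h
    linarith

theorem lowerBound_le_div_of_conflictF_le (hα : 1 ≤ α) (hu : 1 ≤ u) (hw : 1 < w)
    (h : conflictF u w ≤ α) : lowerBound α u ≤ (α - 1) / (w - 1) := by
  have hbound : 0 ≤ (α - 1) / (w - 1) := div_nonneg (by linarith) (by linarith)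
  rcases hu.eq_or_lt with rfl | hu'
  · rwa [lowerBound_one]
  rw [conflictF_le_iff hα hu hw.le] at h
  refine max_le hbound ?_
  rw [div_le_div_iff₀ (by linarith) (by linarith)]
  linarith

theorem mul_add_one_sub_le_of_le_div (hw : 1 < w) (ht : t ≤ (α - 1) / (w - 1)) :
    t * w + (1 - t) ≤ α := by
  rw [le_div_iff₀ (by linarith)] at ht
  linarith

end Arithmetic

section Ratios

variable {v1 v2 : Fin k × Fin k → ℝ} {s : Fin k × Fin k}

theorem rho1_pos (h1 : 0 < v1 s) : 0 < rho1 v1 v2 s :=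
  div_pos h1 (h1.trans_le (le_max_left _ _))

theorem rho2_pos (h2 : 0 < v2 s) : 0 < rho2 v1 v2 s :=
  div_pos h2 (h2.trans_le (le_max_right _ _))

theorem rho1_le_one (h1 : 0 < v1 s) : rho1 v1 v2 s ≤ 1 :=
  div_le_one_of_le₀ (le_max_left _ _) (h1.le.trans (le_max_left _ _))

theorem rho2_le_one (h2 : 0 < v2 s) : rho2 v1 v2 s ≤ 1 :=
  div_le_one_of_le₀ (le_max_right _ _) (h2.le.trans (le_max_right _ _))

theorem one_le_one_div_rho1 (h1 : 0 < v1 s) : 1 ≤ 1 / rho1 v1 v2 s :=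
  one_le_one_div (rho1_pos h1) (rho1_le_one h1)

theorem one_le_one_div_rho2 (h2 : 0 < v2 s) : 1 ≤ 1 / rho2 v1 v2 s :=
  one_le_one_div (rho2_pos h2) (rho2_le_one h2)

theorem rho1_eq_one_or_rho2_eq_one (h1 : 0 < v1 s) (h2 : 0 < v2 s) :
    rho1 v1 v2 s = 1 ∨ rho2 v1 v2 s = 1 := by
  unfold rho1 rho2
  rcases max_choice (v1 s) (v2 s) with h | h <;> rw [h]
  · exact .inl (div_self h1.ne')
  · exact .inr (div_self h2.ne')

end Ratios

section Truthful

variable {v1 v2 x1 x2 x : Fin k × Fin k → ℝ} {p q : Fin k × Fin k}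

theorem InT.le_of_step (hx : InT v1 v2 x1 x2) (h : step v1 v2 p q) : x1 p ≤ x1 q := by
  obtain ⟨-, -, hsum, hmono1, hmono2⟩ := hx
  obtain ⟨a, c⟩ := p
  obtain ⟨b, d⟩ := q
  rcases h with ⟨rfl, h⟩ | ⟨rfl, h⟩
  · exact hmono1 a b _ h
  · linarith [hmono2 a d c h, hsum (a, c), hsum (a, d)]

theorem InT.le_of_transGen (hx : InT v1 v2 x1 x2) (h : Relation.TransGen (step v1 v2) p q) :
    x1 p ≤ x1 q := by
  simpa [Relation.transGen_eq_self] using h.lift x1 fun _ _ => hx.le_of_step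

theorem inT_one_sub (h0 : ∀ s, 0 ≤ x s) (h1 : ∀ s, x s ≤ 1)
    (hmono : ∀ p q, step v1 v2 p q → x p ≤ x q) : InT v1 v2 x (fun s => 1 - x s) := by
  refine ⟨fun s => ⟨h0 s, h1 s⟩, fun s => ⟨by linarith [h1 s], by linarith [h0 s]⟩,
    fun s => by ring, fun a b c h => hmono _ _ (.inl ⟨rfl, h⟩), fun a c d h => ?_⟩
  linarith [hmono _ _ (.inr ⟨rfl, h⟩ : step v1 v2 (a, d) (a, c))]

end Truthful

section Characterization

variable {α : ℝ} {v1 v2 : Fin k × Fin k → ℝ}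

theorem conflictF_le_of_inT (hα : 1 ≤ α) (hv1 : ∀ s, 0 < v1 s) (hv2 : ∀ s, 0 < v2 s)
    {x1 x2 : Fin k × Fin k → ℝ} (hx : InT v1 v2 x1 x2)
    (hcost : ∀ s, x1 s / rho1 v1 v2 s + x2 s / rho2 v1 v2 s ≤ α)
    {s s' : Fin k × Fin k} (hss' : Relation.TransGen (step v1 v2) s s') :
    conflictF (1 / rho2 v1 v2 s) (1 / rho1 v1 v2 s') ≤ α := by
  have hmono := hx.le_of_transGen hss'
  obtain ⟨hx1, -, hsum, -⟩ := hx
  have hx2 : ∀ s, x2 s = 1 - x1 s := fun s => by linarith [hsum s]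
  refine conflictF_le_of_le hα (one_le_one_div_rho2 (hv2 s)) (one_le_one_div_rho1 (hv1 s')) hmono
    ?_ ?_
  · calc x1 s + (1 - x1 s) * (1 / rho2 v1 v2 s)
        ≤ x1 s / rho1 v1 v2 s + x2 s / rho2 v1 v2 s := by
          rw [hx2, ← div_eq_mul_one_div]
          gcongr
          exact le_div_self (hx1 s).1 (rho1_pos (hv1 s)) (rho1_le_one (hv1 s))
      _ ≤ α := hcost s
  · calc x1 s' * (1 / rho1 v1 v2 s') + (1 - x1 s')
        ≤ x1 s' / rho1 v1 v2 s' + x2 s' / rho2 v1 v2 s' := by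
          rw [hx2, ← div_eq_mul_one_div]
          gcongr
          exact le_div_self (by linarith [hx1 s']) (rho2_pos (hv2 s')) (rho2_le_one (hv2 s'))
      _ ≤ α := hcost s'

theorem exists_inT_cost_le (hα : 1 ≤ α) (hv1 : ∀ s, 0 < v1 s) (hv2 : ∀ s, 0 < v2 s)
    (hconf : ∀ s s', Relation.TransGen (step v1 v2) s s' →
      conflictF (1 / rho2 v1 v2 s) (1 / rho1 v1 v2 s') ≤ α) :
    ∃ x1 x2 : Fin k × Fin k → ℝ, InT v1 v2 x1 x2 ∧
      ∀ s, x1 s / rho1 v1 v2 s + x2 s / rho2 v1 v2 s ≤ α := by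
  set g := fun p => lowerBound α (1 / rho2 v1 v2 p)
  set x := reachSup (step v1 v2) g
  have hx0 : ∀ s, 0 ≤ x s := fun s => lowerBound_nonneg.trans (le_reachSup (g := g) .refl)
  have hx1 : ∀ s, x s ≤ 1 := fun s =>
    reachSup_le_iff.2 fun p _ => lowerBound_le_one hα (one_le_one_div_rho2 (hv2 p))
  refine ⟨x, fun s => 1 - x s, inT_one_sub hx0 hx1 fun p q h => reachSup_mono (.single h),
    fun s => ?_⟩
  rcases rho1_eq_one_or_rho2_eq_one (hv1 s) (hv2 s) with h | h
  · rw [h, div_one, div_eq_mul_one_div (1 - x s)]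
    exact add_one_sub_mul_le_of_lowerBound_le hα (one_le_one_div_rho2 (hv2 s))
      (le_reachSup (g := g) .refl)
  · rw [h, div_one, div_eq_mul_one_div (x s)]
    rcases (one_le_one_div_rho1 (hv1 s)).eq_or_lt with hw | hw
    · rw [← hw]
      linarith
    refine mul_add_one_sub_le_of_le_div hw (reachSup_le_iff.2 fun p hp => ?_)
    rcases Relation.reflTransGen_iff_eq_or_transGen.1 hp with rfl | hps
    · simp only [g, h, div_one, lowerBound_one]
      exact div_nonneg (by linarith) (by linarith)
    · exact lowerBound_le_div_of_conflictF_le hα (one_le_one_div_rho2 (hv2 p)) hw (hconf p s hps)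

end Characterization

/-- with `n = 2`, a truthful allocation rule of cost approximation ratio
at most `α` exists iff there is no `α`-cost conflict pair. -/
theorem stmt17 (k : ℕ) [NeZero k] (α : ℝ) (hα : 1 ≤ α)
    (v1 v2 : Fin k × Fin k → ℝ)
    (hv1 : ∀ s, 0 < v1 s) (hv2 : ∀ s, 0 < v2 s) :
    (∃ x1 x2 : Fin k × Fin k → ℝ, InT v1 v2 x1 x2 ∧
      Finset.univ.sup' Finset.univ_nonempty
        (fun s : Fin k × Fin k =>
          x1 s / rho1 v1 v2 s + x2 s / rho2 v1 v2 s) ≤ α) ↔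
    (∀ s s', Relation.TransGen (step v1 v2) s s' →
      conflictF (1 / rho2 v1 v2 s) (1 / rho1 v1 v2 s') ≤ α) := by
  constructor
  · rintro ⟨x1, x2, hx, hcost⟩ s s' hss'
    rw [Finset.sup'_le_iff] at hcost
    exact conflictF_le_of_inT hα hv1 hv2 hx (fun s => hcost s (Finset.mem_univ s)) hss'
  · intro hconf
    obtain ⟨x1, x2, hx, hcost⟩ := exists_inT_cost_le hα hv1 hv2 hconf
    exact ⟨x1, x2, hx, Finset.sup'_le _ _ fun s _ => hcost s⟩

end Stmt17
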